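/- arXiv:1205.5129 — 2 statements merged into one kernel-verified Lean document; each statement's English description precedes it below -/
import Mathlib

section
/- Let 0 < d ≤ 1, 0 < ε ≤ 1 with ε ≤ d, and let f, g ∈ H¹(−d, d). Then |(1/(2ε))·∫_{−ε}^{ε} f(s)·conj(g(s)) ds − f(0)·conj(g(0))| ≤ 2·(ε/d)^{1/2}·‖f‖_{H¹(−d,d)}·‖g‖_{H¹(−d,d)}. -/
/-!
Write `F = f · conj g`. Integrating `F'` by parts against the weights `-ε - t` on `[-ε, 0]` and
`ε - t` on `[0, ε]` gives the midpoint-rule estimate `‖∫_{-ε}^{ε} F - 2ε F(0)‖ ≤ ε ∫_{-ε}^{ε} ‖F'‖`,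
and `‖F'‖ ≤ ‖f'‖ ‖g‖ + ‖f‖ ‖g'‖`. On an interval of length `2d ≤ 2` the sup norm is controlled by
the `H¹` norm, `‖g‖_∞² ≤ 3/(2d) ‖g‖²_{H¹}`: the minimum of `‖g‖²` is at most its mean, and the
oscillation of `‖g‖² = g · conj g` is at most `∫ ‖g‖² + ‖g'‖²`. Cauchy–Schwarz gives
`∫_{-ε}^{ε} ‖f'‖ ≤ √(2ε) ‖f‖_{H¹}`, so the error is at most `√3 √(ε/d) ‖f‖_{H¹} ‖g‖_{H¹}`.
-/

open MeasureTheory intervalIntegral Set ComplexConjugate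

section Calculus

variable {E : Type*} [NormedAddCommGroup E] {F F' : ℝ → E} {a b : ℝ}

theorem integral_norm_le_sqrt_mul_sqrt {u : ℝ → E} (hab : a ≤ b)
    (hu : IntervalIntegrable u volume a b)
    (hu2 : IntervalIntegrable (fun t => ‖u t‖ ^ 2) volume a b) :
    ∫ t in a..b, ‖u t‖ ≤ √(b - a) * √(∫ t in a..b, ‖u t‖ ^ 2) := by
  have hmem : MemLp u 2 (volume.restrict (Ioc a b)) :=
    (memLp_two_iff_integrable_sq_norm hu.1.aestronglyMeasurable).2 hu2.1
  have holder := integral_mul_norm_le_Lp_mul_Lq Real.HolderConjugate.two_two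
    (f := fun t => ‖u t‖) (g := fun _ => (1 : ℝ)) (by simpa using hmem.norm) (memLp_const 1)
  simp only [norm_norm, norm_one, mul_one, Real.one_rpow, MeasureTheory.integral_const] at holder
  rw [integral_of_le hab, integral_of_le hab, Real.sqrt_eq_rpow, Real.sqrt_eq_rpow, mul_comm]
  convert holder using 3
  · norm_num
  · simp [hab]

variable [NormedSpace ℝ E]

theorem norm_integral_smul_le_of_abs_le {w : ℝ → ℝ} {C : ℝ} (hab : a ≤ b)
    (hw : ∀ t ∈ Ioc a b, |w t| ≤ C) (hint : IntervalIntegrable F' volume a b) :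
    ‖∫ t in a..b, w t • F' t‖ ≤ C * ∫ t in a..b, ‖F' t‖ := by
  rw [← intervalIntegral.integral_const_mul]
  refine norm_integral_le_of_norm_le (f := fun t => w t • F' t) hab (.of_forall fun t ht => ?_)
    (hint.norm.const_mul C)
  rw [norm_smul, Real.norm_eq_abs]
  exact mul_le_mul_of_nonneg_right (hw t ht) (norm_nonneg _)

variable [CompleteSpace E]

theorem norm_sub_le_integral_norm_deriv (hF : ContinuousOn F (Icc a b))
    (hF' : ∀ t ∈ Ioo a b, HasDerivAt F (F' t) t) (hint : IntervalIntegrable F' volume a b)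
    {x y : ℝ} (hx : x ∈ Icc a b) (hy : y ∈ Icc a b) :
    ‖F x - F y‖ ≤ ∫ t in a..b, ‖F' t‖ := by
  wlog hyx : y ≤ x generalizing x y
  · rw [norm_sub_rev]
    exact this hy hx (le_of_not_ge hyx)
  rw [← integral_eq_sub_of_hasDerivAt_of_le hyx (hF.mono (Icc_subset_Icc hy.1 hx.2))
    (fun t ht => hF' t ⟨hy.1.trans_lt ht.1, ht.2.trans_le hx.2⟩)
    (hint.mono_set (uIcc_subset_uIcc (mem_uIcc_of_le hy.1 hy.2) (mem_uIcc_of_le hx.1 hx.2)))]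
  exact (intervalIntegral.norm_integral_le_integral_norm hyx).trans
    (integral_mono_interval hy.1 hyx hx.2 (.of_forall fun _ => norm_nonneg _) hint.norm)

theorem integral_sub_smul_deriv_eq (c : ℝ) (hab : a ≤ b) (hF : ContinuousOn F (Icc a b))
    (hF' : ∀ t ∈ Ioo a b, HasDerivAt F (F' t) t) (hint : IntervalIntegrable F' volume a b) :
    ∫ t in a..b, (c - t) • F' t = (c - b) • F b - (c - a) • F a + ∫ t in a..b, F t := by
  rw [← uIcc_of_le hab] at hF
  rw [integral_smul_deriv_eq_deriv_smul_of_hasDerivAt (u' := fun _ => -1) (by fun_prop) hF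
    (fun t _ => by simpa using (hasDerivAt_id t).const_sub c)
    (fun t ht => hF' t (by rwa [min_eq_left hab, max_eq_right hab] at ht)) (by simp) hint]
  simp [intervalIntegral.integral_neg]

theorem norm_integral_sub_smul_midpoint_le (hab : a ≤ b) (hF : ContinuousOn F (Icc a b))
    (hF' : ∀ t ∈ Ioo a b, HasDerivAt F (F' t) t) (hint : IntervalIntegrable F' volume a b) :
    ‖(∫ t in a..b, F t) - (b - a) • F ((a + b) / 2)‖ ≤ (b - a) / 2 * ∫ t in a..b, ‖F' t‖ := by
  set m := (a + b) / 2 with hm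
  have ham : a ≤ m := by linarith
  have hmb : m ≤ b := by linarith
  have hint_am : IntervalIntegrable F' volume a m :=
    hint.mono_set (uIcc_subset_uIcc_left (mem_uIcc_of_le ham hmb))
  have hint_mb : IntervalIntegrable F' volume m b :=
    hint.mono_set (uIcc_subset_uIcc_right (mem_uIcc_of_le ham hmb))
  have hleft := integral_sub_smul_deriv_eq a ham (hF.mono (Icc_subset_Icc_right hmb))
    (fun t ht => hF' t ⟨ht.1, ht.2.trans_le hmb⟩) hint_am
  have hright := integral_sub_smul_deriv_eq b hmb (hF.mono (Icc_subset_Icc_left ham))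
    (fun t ht => hF' t ⟨ham.trans_lt ht.1, ht.2⟩) hint_mb
  have hsplit : (∫ t in a..b, F t) - (b - a) • F m
      = (∫ t in a..m, (a - t) • F' t) + ∫ t in m..b, (b - t) • F' t := by
    rw [hleft, hright, ← integral_add_adjacent_intervals
      ((hF.mono (Icc_subset_Icc_right hmb)).intervalIntegrable_of_Icc ham)
      ((hF.mono (Icc_subset_Icc_left ham)).intervalIntegrable_of_Icc hmb)]
    simp only [sub_self, zero_smul, zero_sub, sub_zero]
    rw [show b - a = (b - m) - (a - m) by ring, sub_smul]
    abel
  have hbound_left : ‖∫ t in a..m, (a - t) • F' t‖ ≤ (b - a) / 2 * ∫ t in a..m, ‖F' t‖ :=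
    norm_integral_smul_le_of_abs_le ham (fun t ht => by
      rw [abs_sub_comm, abs_of_nonneg (by linarith [ht.1])]; linarith [ht.2]) hint_am
  have hbound_right : ‖∫ t in m..b, (b - t) • F' t‖ ≤ (b - a) / 2 * ∫ t in m..b, ‖F' t‖ :=
    norm_integral_smul_le_of_abs_le hmb (fun t ht => by
      rw [abs_of_nonneg (by linarith [ht.2])]; linarith [ht.1]) hint_mb
  rw [hsplit, ← integral_add_adjacent_intervals hint_am.norm hint_mb.norm, mul_add]
  exact (norm_add_le _ _).trans (add_le_add hbound_left hbound_right)

end Calculus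

theorem IntervalIntegrable.conj {u : ℝ → ℂ} {a b : ℝ} (hu : IntervalIntegrable u volume a b) :
    IntervalIntegrable (fun t => conj (u t)) volume a b :=
  ⟨Complex.conjCLE.toContinuousLinearMap.integrable_comp hu.1,
    Complex.conjCLE.toContinuousLinearMap.integrable_comp hu.2⟩

theorem norm_mul_conj_add_mul_conj_le (z z' w w' : ℂ) :
    ‖z' * conj w + z * conj w'‖ ≤ ‖z'‖ * ‖w‖ + ‖z‖ * ‖w'‖ := by
  simpa only [norm_mul, RCLike.norm_conj] using norm_add_le (z' * conj w) (z * conj w')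

/-- Stand-in for `f ∈ H¹(a, b)` with derivative `f'`: a continuous representative on `[a, b]`,
differentiable in the classical sense on `(a, b)`. -/
structure HasSqIntegrableDerivOn (f f' : ℝ → ℂ) (a b : ℝ) : Prop where
  continuousOn : ContinuousOn f (Icc a b)
  hasDerivAt : ∀ t ∈ Ioo a b, HasDerivAt f (f' t) t
  intervalIntegrable_deriv : IntervalIntegrable f' volume a b
  intervalIntegrable_sq_norm_deriv : IntervalIntegrable (fun t => ‖f' t‖ ^ 2) volume a b

noncomputable def h1Norm (f f' : ℝ → ℂ) (a b : ℝ) : ℝ :=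
  √((∫ t in a..b, ‖f t‖ ^ 2) + ∫ t in a..b, ‖f' t‖ ^ 2)

theorem h1Norm_nonneg {f f' : ℝ → ℂ} {a b : ℝ} : 0 ≤ h1Norm f f' a b :=
  Real.sqrt_nonneg _

namespace HasSqIntegrableDerivOn

variable {f f' g g' : ℝ → ℂ} {a b : ℝ}

theorem mono (hf : HasSqIntegrableDerivOn f f' a b) {c e : ℝ} (hac : a ≤ c) (hce : c ≤ e)
    (heb : e ≤ b) : HasSqIntegrableDerivOn f f' c e where
  continuousOn := hf.continuousOn.mono (Icc_subset_Icc hac heb)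
  hasDerivAt t ht := hf.hasDerivAt t ⟨hac.trans_lt ht.1, ht.2.trans_le heb⟩
  intervalIntegrable_deriv := hf.intervalIntegrable_deriv.mono_set
    (uIcc_subset_uIcc (mem_uIcc_of_le hac (hce.trans heb)) (mem_uIcc_of_le (hac.trans hce) heb))
  intervalIntegrable_sq_norm_deriv := hf.intervalIntegrable_sq_norm_deriv.mono_set
    (uIcc_subset_uIcc (mem_uIcc_of_le hac (hce.trans heb)) (mem_uIcc_of_le (hac.trans hce) heb))

theorem intervalIntegrable_sq_norm (hf : HasSqIntegrableDerivOn f f' a b) (hab : a ≤ b) :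
    IntervalIntegrable (fun t => ‖f t‖ ^ 2) volume a b :=
  (hf.continuousOn.norm.pow 2).intervalIntegrable_of_Icc hab

theorem h1Norm_sq (hab : a ≤ b) :
    h1Norm f f' a b ^ 2 = (∫ t in a..b, ‖f t‖ ^ 2) + ∫ t in a..b, ‖f' t‖ ^ 2 :=
  Real.sq_sqrt (add_nonneg (integral_nonneg hab fun _ _ => by positivity)
    (integral_nonneg hab fun _ _ => by positivity))

theorem continuousOn_mul_conj (hf : HasSqIntegrableDerivOn f f' a b)
    (hg : HasSqIntegrableDerivOn g g' a b) :
    ContinuousOn (fun t => f t * conj (g t)) (Icc a b) :=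
  hf.continuousOn.mul (Complex.continuous_conj.comp_continuousOn hg.continuousOn)

theorem hasDerivAt_mul_conj (hf : HasSqIntegrableDerivOn f f' a b)
    (hg : HasSqIntegrableDerivOn g g' a b) :
    ∀ t ∈ Ioo a b, HasDerivAt (fun s => f s * conj (g s))
      (f' t * conj (g t) + f t * conj (g' t)) t :=
  fun t ht => (hf.hasDerivAt t ht).mul (hg.hasDerivAt t ht).star

theorem intervalIntegrable_deriv_mul_conj (hf : HasSqIntegrableDerivOn f f' a b)
    (hg : HasSqIntegrableDerivOn g g' a b) (hab : a ≤ b) :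
    IntervalIntegrable (fun t => f' t * conj (g t) + f t * conj (g' t)) volume a b := by
  have hf_cont := hf.continuousOn
  have hg_cont := Complex.continuous_conj.comp_continuousOn hg.continuousOn
  rw [← uIcc_of_le hab] at hf_cont hg_cont
  exact (hf.intervalIntegrable_deriv.mul_continuousOn hg_cont).add
    (hg.intervalIntegrable_deriv.conj.continuousOn_mul hf_cont)

theorem sq_norm_le (hg : HasSqIntegrableDerivOn g g' a b) (hab : a < b) {x : ℝ}
    (hx : x ∈ Icc a b) :
    ‖g x‖ ^ 2 ≤ (∫ t in a..b, ‖g t‖ ^ 2) / (b - a) + h1Norm g g' a b ^ 2 := by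
  obtain ⟨y, hy, hmin⟩ :=
    isCompact_Icc.exists_isMinOn ⟨x, hx⟩ (hg.continuousOn.norm.pow 2)
  have hy_le : ‖g y‖ ^ 2 ≤ (∫ t in a..b, ‖g t‖ ^ 2) / (b - a) := by
    rw [le_div_iff₀ (sub_pos.2 hab), mul_comm, ← smul_eq_mul, ← intervalIntegral.integral_const]
    exact integral_mono_on hab.le (by simp) (hg.intervalIntegrable_sq_norm hab.le)
      fun t ht => hmin ht
  have hmul_conj : ∀ t, g t * conj (g t) = ((‖g t‖ ^ 2 : ℝ) : ℂ) := by
    simp [Complex.mul_conj']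
  have hderiv_le : ∀ t, ‖g' t * conj (g t) + g t * conj (g' t)‖ ≤ ‖g t‖ ^ 2 + ‖g' t‖ ^ 2 :=
    fun t => (norm_mul_conj_add_mul_conj_le _ _ _ _).trans
      (by nlinarith [sq_nonneg (‖g t‖ - ‖g' t‖)])
  have hxy : ‖g x‖ ^ 2 - ‖g y‖ ^ 2 ≤ h1Norm g g' a b ^ 2 := by
    calc ‖g x‖ ^ 2 - ‖g y‖ ^ 2 ≤ ‖g x * conj (g x) - g y * conj (g y)‖ := by
          rw [hmul_conj, hmul_conj, ← Complex.ofReal_sub, Complex.norm_real, Real.norm_eq_abs]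
          exact le_abs_self _
      _ ≤ ∫ t in a..b, ‖g' t * conj (g t) + g t * conj (g' t)‖ :=
          norm_sub_le_integral_norm_deriv (hg.continuousOn_mul_conj hg)
            (hg.hasDerivAt_mul_conj hg) (hg.intervalIntegrable_deriv_mul_conj hg hab.le) hx hy
      _ ≤ ∫ t in a..b, (‖g t‖ ^ 2 + ‖g' t‖ ^ 2) :=
          integral_mono_on hab.le (hg.intervalIntegrable_deriv_mul_conj hg hab.le).norm
            ((hg.intervalIntegrable_sq_norm hab.le).add hg.intervalIntegrable_sq_norm_deriv)
            fun t _ => hderiv_le t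
      _ = h1Norm g g' a b ^ 2 := by
          rw [h1Norm_sq hab.le, intervalIntegral.integral_add (hg.intervalIntegrable_sq_norm hab.le)
            hg.intervalIntegrable_sq_norm_deriv]
  linarith

theorem norm_le_sqrt_mul_h1Norm (hg : HasSqIntegrableDerivOn g g' a b) (hab : a < b)
    (hba : b - a ≤ 2) {x : ℝ} (hx : x ∈ Icc a b) :
    ‖g x‖ ≤ √(3 / (b - a)) * h1Norm g g' a b := by
  have hlen : 0 < b - a := sub_pos.2 hab
  have hA : ∫ t in a..b, ‖g t‖ ^ 2 ≤ h1Norm g g' a b ^ 2 := by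
    rw [h1Norm_sq hab.le]
    exact le_add_of_nonneg_right (integral_nonneg hab.le fun _ _ => by positivity)
  have hsq : ‖g x‖ ^ 2 ≤ 3 / (b - a) * h1Norm g g' a b ^ 2 := by
    calc ‖g x‖ ^ 2 ≤ (∫ t in a..b, ‖g t‖ ^ 2) / (b - a) + h1Norm g g' a b ^ 2 :=
          hg.sq_norm_le hab hx
      _ ≤ h1Norm g g' a b ^ 2 / (b - a) + 2 / (b - a) * h1Norm g g' a b ^ 2 := by
          gcongr
          exact le_mul_of_one_le_left (sq_nonneg _) ((one_le_div hlen).2 hba)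
      _ = 3 / (b - a) * h1Norm g g' a b ^ 2 := by ring
  rw [← Real.sqrt_sq h1Norm_nonneg, ← Real.sqrt_mul (by positivity)]
  exact Real.le_sqrt_of_sq_le hsq

theorem integral_norm_deriv_le (hf : HasSqIntegrableDerivOn f f' a b) {c e : ℝ} (hac : a ≤ c)
    (hce : c ≤ e) (heb : e ≤ b) :
    ∫ t in c..e, ‖f' t‖ ≤ √(e - c) * h1Norm f f' a b := by
  have hfce := hf.mono hac hce heb
  refine (integral_norm_le_sqrt_mul_sqrt hce hfce.intervalIntegrable_deriv
    hfce.intervalIntegrable_sq_norm_deriv).trans (mul_le_mul_of_nonneg_left ?_ (Real.sqrt_nonneg _))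
  refine Real.sqrt_le_sqrt ((integral_mono_interval hac hce heb
    (.of_forall fun _ => by positivity) hf.intervalIntegrable_sq_norm_deriv).trans ?_)
  exact le_add_of_nonneg_left (integral_nonneg (hac.trans (hce.trans heb)) fun _ _ => by positivity)

theorem integral_norm_deriv_mul_conj_le (hf : HasSqIntegrableDerivOn f f' a b)
    (hg : HasSqIntegrableDerivOn g g' a b) (hab : a < b) (hba : b - a ≤ 2) {c e : ℝ}
    (hac : a ≤ c) (hce : c ≤ e) (heb : e ≤ b) :
    ∫ t in c..e, ‖f' t * conj (g t) + f t * conj (g' t)‖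
      ≤ 2 * √(e - c) * √(3 / (b - a)) * h1Norm f f' a b * h1Norm g g' a b := by
  set Mf := √(3 / (b - a)) * h1Norm f f' a b
  set Mg := √(3 / (b - a)) * h1Norm g g' a b
  have hMf : 0 ≤ Mf := mul_nonneg (Real.sqrt_nonneg _) h1Norm_nonneg
  have hMg : 0 ≤ Mg := mul_nonneg (Real.sqrt_nonneg _) h1Norm_nonneg
  have hfce := hf.mono hac hce heb
  have hgce := hg.mono hac hce heb
  have hf'_int := hfce.intervalIntegrable_deriv.norm.mul_const Mg
  have hg'_int := hgce.intervalIntegrable_deriv.norm.const_mul Mf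
  calc ∫ t in c..e, ‖f' t * conj (g t) + f t * conj (g' t)‖
      ≤ ∫ t in c..e, (‖f' t‖ * Mg + Mf * ‖g' t‖) := by
        refine integral_mono_on hce (hfce.intervalIntegrable_deriv_mul_conj hgce hce).norm
          (hf'_int.add hg'_int) fun t ht => (norm_mul_conj_add_mul_conj_le _ _ _ _).trans ?_
        have ht' : t ∈ Icc a b := ⟨hac.trans ht.1, ht.2.trans heb⟩
        gcongr
        · exact hg.norm_le_sqrt_mul_h1Norm hab hba ht'
        · exact hf.norm_le_sqrt_mul_h1Norm hab hba ht'
    _ = (∫ t in c..e, ‖f' t‖) * Mg + Mf * ∫ t in c..e, ‖g' t‖ := by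
        rw [intervalIntegral.integral_add hf'_int hg'_int, intervalIntegral.integral_mul_const,
          intervalIntegral.integral_const_mul]
    _ ≤ (√(e - c) * h1Norm f f' a b) * Mg + Mf * (√(e - c) * h1Norm g g' a b) := by
        gcongr
        · exact hf.integral_norm_deriv_le hac hce heb
        · exact hg.integral_norm_deriv_le hac hce heb
    _ = 2 * √(e - c) * √(3 / (b - a)) * h1Norm f f' a b * h1Norm g g' a b := by ring

theorem norm_integral_mul_conj_sub_midpoint_le (hf : HasSqIntegrableDerivOn f f' a b)
    (hg : HasSqIntegrableDerivOn g g' a b) (hab : a < b) (hba : b - a ≤ 2) {c e : ℝ}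
    (hac : a ≤ c) (hce : c ≤ e) (heb : e ≤ b) :
    ‖(∫ t in c..e, f t * conj (g t)) - (e - c) • (f ((c + e) / 2) * conj (g ((c + e) / 2)))‖
      ≤ (e - c) * √(3 * (e - c) / (b - a)) * h1Norm f f' a b * h1Norm g g' a b := by
  have hfce := hf.mono hac hce heb
  have hgce := hg.mono hac hce heb
  refine (norm_integral_sub_smul_midpoint_le hce (hfce.continuousOn_mul_conj hgce)
    (hfce.hasDerivAt_mul_conj hgce) (hfce.intervalIntegrable_deriv_mul_conj hgce hce)).trans ?_
  calc (e - c) / 2 * ∫ t in c..e, ‖f' t * conj (g t) + f t * conj (g' t)‖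
      ≤ (e - c) / 2 * (2 * √(e - c) * √(3 / (b - a)) * h1Norm f f' a b * h1Norm g g' a b) := by
        gcongr
        exact hf.integral_norm_deriv_mul_conj_le hg hab hba hac hce heb
    _ = (e - c) * √(3 * (e - c) / (b - a)) * h1Norm f f' a b * h1Norm g g' a b := by
        rw [mul_div_right_comm, Real.sqrt_mul (div_nonneg (by norm_num) (sub_nonneg.2 hab.le))]
        ring

end HasSqIntegrableDerivOn

theorem averaging_estimate_general (d ε : ℝ) (hd : 0 < d) (hd1 : d ≤ 1)
    (hε : 0 < ε) (hεd : ε ≤ d)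
    (f f' g g' : ℝ → ℂ)
    (hf_cont : ContinuousOn f (Set.Icc (-d) d))
    (hf_deriv : ∀ t ∈ Set.Ioo (-d) d, HasDerivAt f (f' t) t)
    (hf'_int : IntervalIntegrable f' volume (-d) d)
    (hf'_sq : IntervalIntegrable (fun t => ‖f' t‖ ^ 2) volume (-d) d)
    (hg_cont : ContinuousOn g (Set.Icc (-d) d))
    (hg_deriv : ∀ t ∈ Set.Ioo (-d) d, HasDerivAt g (g' t) t)
    (hg'_int : IntervalIntegrable g' volume (-d) d)
    (hg'_sq : IntervalIntegrable (fun t => ‖g' t‖ ^ 2) volume (-d) d) :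
    ‖((1 / (2 * ε) : ℝ) : ℂ) * (∫ s in (-ε)..ε, f s * (starRingEnd ℂ) (g s))
        - f 0 * (starRingEnd ℂ) (g 0)‖
      ≤ 2 * Real.sqrt (ε / d)
          * Real.sqrt ((∫ t in (-d)..d, ‖f t‖ ^ 2) + ∫ t in (-d)..d, ‖f' t‖ ^ 2)
          * Real.sqrt ((∫ t in (-d)..d, ‖g t‖ ^ 2) + ∫ t in (-d)..d, ‖g' t‖ ^ 2) := by
  have hf : HasSqIntegrableDerivOn f f' (-d) d := ⟨hf_cont, hf_deriv, hf'_int, hf'_sq⟩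
  have hg : HasSqIntegrableDerivOn g g' (-d) d := ⟨hg_cont, hg_deriv, hg'_int, hg'_sq⟩
  have hmidpoint := hf.norm_integral_mul_conj_sub_midpoint_le hg (by linarith) (by linarith)
    (neg_le_neg hεd) (by linarith) hεd
  rw [show ε - -ε = 2 * ε by ring, show (-ε + ε) / 2 = 0 by ring, show d - -d = 2 * d by ring]
    at hmidpoint
  have hconst : √(3 * (2 * ε) / (2 * d)) ≤ 2 * √(ε / d) := by
    rw [show 3 * (2 * ε) / (2 * d) = 3 * (ε / d) by field_simp, Real.sqrt_mul (by norm_num)]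
    gcongr
    rw [Real.sqrt_le_left (by norm_num)]
    norm_num
  have hrescale : ((1 / (2 * ε) : ℝ) : ℂ) * (∫ s in (-ε)..ε, f s * conj (g s)) - f 0 * conj (g 0)
      = (1 / (2 * ε)) • ((∫ s in (-ε)..ε, f s * conj (g s)) - (2 * ε) • (f 0 * conj (g 0))) := by
    rw [smul_sub, smul_smul, one_div_mul_cancel (by positivity), one_smul, Complex.real_smul]
  rw [hrescale, norm_smul, Real.norm_of_nonneg (by positivity)]
  calc 1 / (2 * ε) * ‖(∫ s in (-ε)..ε, f s * conj (g s)) - (2 * ε) • (f 0 * conj (g 0))‖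
      ≤ 1 / (2 * ε) * (2 * ε * √(3 * (2 * ε) / (2 * d)) * h1Norm f f' (-d) d
          * h1Norm g g' (-d) d) := by gcongr
    _ = √(3 * (2 * ε) / (2 * d)) * h1Norm f f' (-d) d * h1Norm g g' (-d) d := by field_simp
    _ ≤ 2 * √(ε / d) * h1Norm f f' (-d) d * h1Norm g g' (-d) d := by
        gcongr <;> exact h1Norm_nonneg

/-- Averaging lemma: for `0 < d ≤ 1`, `0 < ε ≤ 1` with `ε ≤ d`, and
`f, g ∈ H¹(−d,d)` (continuous representatives with derivatives `f'`, `g'`),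
`|(1/(2ε))·∫_{−ε}^{ε} f·conj g − f(0)·conj(g(0))| ≤ 2·(ε/d)^{1/2}·‖f‖_{H¹}·‖g‖_{H¹}`,
where `‖f‖_{H¹} = (‖f‖²_{L²} + ‖f′‖²_{L²})^{1/2}`. -/
theorem averaging_estimate (d ε : ℝ) (hd : 0 < d) (hd1 : d ≤ 1)
    (hε : 0 < ε) (hε1 : ε ≤ 1) (hεd : ε ≤ d)
    (f f' g g' : ℝ → ℂ)
    (hf_cont : ContinuousOn f (Set.Icc (-d) d))
    (hf_deriv : ∀ t ∈ Set.Ioo (-d) d, HasDerivAt f (f' t) t)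
    (hf'_int : IntervalIntegrable f' volume (-d) d)
    (hf'_sq : IntervalIntegrable (fun t => ‖f' t‖ ^ 2) volume (-d) d)
    (hg_cont : ContinuousOn g (Set.Icc (-d) d))
    (hg_deriv : ∀ t ∈ Set.Ioo (-d) d, HasDerivAt g (g' t) t)
    (hg'_int : IntervalIntegrable g' volume (-d) d)
    (hg'_sq : IntervalIntegrable (fun t => ‖g' t‖ ^ 2) volume (-d) d) :
    ‖((1 / (2 * ε) : ℝ) : ℂ) * (∫ s in (-ε)..ε, f s * (starRingEnd ℂ) (g s))
        - f 0 * (starRingEnd ℂ) (g 0)‖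
      ≤ 2 * Real.sqrt (ε / d)
          * Real.sqrt ((∫ t in (-d)..d, ‖f t‖ ^ 2) + ∫ t in (-d)..d, ‖f' t‖ ^ 2)
          * Real.sqrt ((∫ t in (-d)..d, ‖g t‖ ^ 2) + ∫ t in (-d)..d, ‖g' t‖ ^ 2) :=
  averaging_estimate_general d ε hd hd1 hε hεd f f' g g' hf_cont hf_deriv hf'_int hf'_sq hg_cont
    hg_deriv hg'_int hg'_sq
end

section
/- Let n ≥ 1, m ≤ n, S ∈ ℂ^{m×m} Hermitian, and T ∈ ℂ^{m×(n−m)}. Define the n×n block matrices A = [[S, 0],[−T*, I_{n−m}]] and B = [[I_m, T],[0, 0]]. Then the n×2n matrix (A | B) has rank n, and A·B* is Hermitian. Consequently, the vertex conditions B·f′(0) = A·f(0) are admissible self-adjoint vertex conditions for a quantum graph vertex of degree n. -/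
open Matrix

/-!
The matrix `(A | B)` has an explicit right inverse, `[[0, 0], [0, I]]` stacked on
`[[I, 0], [0, 0]]`, so its rank is its height. In `A B*` the off-diagonal block `T` cancels against `-T*`, leaving
`[[S, 0], [0, 0]]`, which is Hermitian because `S` is.
-/

namespace Matrix

variable {l o R : Type*}

theorem rank_eq_card_height_of_mul_eq_one {n : Type*} [Fintype l] [DecidableEq l] [Fintype n]
    [CommSemiring R] [StrongRankCondition R] {A : Matrix l n R} {B : Matrix n l R}
    (h : A * B = 1) : A.rank = Fintype.card l :=
  le_antisymm A.rank_le_card_height (by simpa [h, rank_one] using A.rank_mul_le_left B)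

variable [Fintype l] [Fintype o] [DecidableEq l] [DecidableEq o]

theorem fromCols_fromBlocks_mul_fromRows_fromBlocks [Semiring R] (S : Matrix l l R)
    (C : Matrix o l R) (T : Matrix l o R) :
    fromCols (fromBlocks S 0 C (1 : Matrix o o R))
        (fromBlocks (1 : Matrix l l R) T 0 (0 : Matrix o o R)) *
        fromRows (fromBlocks (0 : Matrix l l R) 0 0 (1 : Matrix o o R))
          (fromBlocks (1 : Matrix l l R) 0 0 (0 : Matrix o o R)) = 1 := by
  simp [fromCols_mul_fromRows, fromBlocks_multiply, fromBlocks_add, ← fromBlocks_one]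

theorem fromBlocks_neg_conjTranspose_mul_conjTranspose [Ring R] [StarRing R]
    (S : Matrix l l R) (T : Matrix l o R) :
    fromBlocks S 0 (-Tᴴ) 1 * (fromBlocks 1 T 0 (0 : Matrix o o R))ᴴ = fromBlocks S 0 0 0 := by
  simp [fromBlocks_conjTranspose, fromBlocks_multiply]

end Matrix

/-- The ST-parametrisation gives admissible self-adjoint vertex conditions:
for Hermitian `S ∈ ℂ^{m×m}` and `T ∈ ℂ^{m×k}` (degree `n = m + k`), the block
matrices `A = [[S, 0], [−T*, I]]` and `B = [[I, T], [0, 0]]` satisfy that the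
`n × 2n` matrix `(A | B)` has maximal rank `n = m + k`, and `A·B*` is
Hermitian (Kostrykin–Schrader conditions). -/
theorem ST_parametrisation_admissible (m k : ℕ)
    (S : Matrix (Fin m) (Fin m) ℂ) (hS : S.IsHermitian)
    (T : Matrix (Fin m) (Fin k) ℂ) :
    (Matrix.fromCols
        (Matrix.fromBlocks S 0 (-T.conjTranspose) (1 : Matrix (Fin k) (Fin k) ℂ))
        (Matrix.fromBlocks (1 : Matrix (Fin m) (Fin m) ℂ) T 0 0)).rank = m + k ∧
    ((Matrix.fromBlocks S 0 (-T.conjTranspose) (1 : Matrix (Fin k) (Fin k) ℂ))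
        * (Matrix.fromBlocks (1 : Matrix (Fin m) (Fin m) ℂ) T 0 0).conjTranspose).IsHermitian := by
  constructor
  · simpa using rank_eq_card_height_of_mul_eq_one
      (fromCols_fromBlocks_mul_fromRows_fromBlocks S (-Tᴴ) T)
  · rw [fromBlocks_neg_conjTranspose_mul_conjTranspose]
    exact hS.fromBlocks (by simp) isHermitian_zero
end
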